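/- arXiv:2312.10491 — 6 statements merged into one kernel-verified Lean document; each statement's English description precedes it below -/
import Mathlib

section
/- Let n ≥ 1, let g : ℝ → ℝ and f : ℝ → ℝ be n times continuously differentiable. Then for every x ∈ ℝ, the n-th derivative of f ∘ g at x equals Σ_{k=1}^{n} f^{(k)}(g(x)) · B^g_{n,k}(x) (Faà di Bruno's formula in partial Bell polynomial form). -/
/-- The univariate partial Bell polynomial `B_{n,k}(x_1, …, x_{n-k+1})`:
the sum over all sequences `j_1, …, j_{n-k+1}` of nonnegative integers with
`j_1 + … + j_{n-k+1} = k` and `j_1 + 2 j_2 + … + (n-k+1) j_{n-k+1} = n` of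
`n!/(j_1! ⋯ j_{n-k+1}!) ∏_i (x_i / i!)^{j_i}`. -/
noncomputable def bellPoly (n k : ℕ) (x : ℕ → ℝ) : ℝ :=
  ∑ j ∈ (Fintype.piFinset fun _ : Fin (n - k + 1) => Finset.range (n + 1)).filter
      (fun j => (∑ i, j i) = k ∧ (∑ i, (i.1 + 1) * j i) = n),
    ((n.factorial : ℝ) / ∏ i, ((j i).factorial : ℝ)) *
      ∏ i, (x (i.1 + 1) / ((i.1 + 1).factorial : ℝ)) ^ j i

/-!
Mathlib's Faà di Bruno formula writes the `n`-th derivative of `f ∘ g` as a sum over ordered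
partitions of `Fin n`. Grouping the partitions by their number `k` of blocks gives a polynomial
`finpartitionBell n k` in the derivatives of `g`. To identify it with `B_{n,k}` without counting
partitions, apply the formula at `0` to the polynomials `f = X^k / k!` and
`g = ∑_{i ≤ n-k+1} y_i X^i / i!`: the left-hand side is `n!` times the coefficient of `X^n` in
`g^k / k!`, which the multinomial theorem turns into `B_{n,k}(y)`.
-/

open Finset Polynomial Nat

namespace Polynomial

variable {𝕜 : Type*} [NontriviallyNormedField 𝕜]

lemma contDiff_eval (p : 𝕜[X]) (n : WithTop ℕ∞) : ContDiff 𝕜 n fun x => p.eval x := by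
  simpa using p.contDiff_aeval (𝕜 := 𝕜) n

lemma iteratedDeriv_eval (p : 𝕜[X]) (n : ℕ) :
    iteratedDeriv n (fun x => p.eval x) = fun x => (derivative^[n] p).eval x := by
  induction n with
  | zero => simp
  | succ n ih =>
    ext x
    rw [iteratedDeriv_succ, ih, Function.iterate_succ_apply', Polynomial.deriv]

lemma iteratedDeriv_eval_zero (p : 𝕜[X]) (n : ℕ) :
    iteratedDeriv n (fun x => p.eval x) 0 = n ! * p.coeff n := by
  simp only [iteratedDeriv_eval, ← coeff_zero_eq_eval_zero, coeff_iterate_derivative, zero_add,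
    Nat.descFactorial_self, nsmul_eq_mul]

variable {R ι : Type*} [CommSemiring R] [DecidableEq ι]

lemma coeff_sum_C_mul_X_pow_pow (s : Finset ι) (a : ι → R) (w : ι → ℕ) (k n : ℕ) :
    ((∑ i ∈ s, C (a i) * X ^ w i) ^ k).coeff n =
      ∑ j ∈ piAntidiag s k with ∑ i ∈ s, w i * j i = n,
        multinomial s j * ∏ i ∈ s, a i ^ j i := by
  rw [sum_pow_eq_sum_piAntidiag, finsetSum_coeff, sum_filter]
  refine sum_congr rfl fun j _ => ?_
  have hterm : (multinomial s j : R[X]) * ∏ i ∈ s, (C (a i) * X ^ w i) ^ j i =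
      C (multinomial s j * ∏ i ∈ s, a i ^ j i) * X ^ ∑ i ∈ s, w i * j i := by
    simp only [mul_pow, prod_mul_distrib, ← pow_mul, prod_pow_eq_pow_sum, ← C_pow, ← map_prod,
      map_mul, map_natCast, mul_assoc]
  rw [hterm, coeff_C_mul_X_pow]
  simp only [eq_comm]

end Polynomial

namespace OrderedFinpartition

variable {n : ℕ} (c : OrderedFinpartition n)

lemma sum_partSize : ∑ m, c.partSize m = n := by
  simpa using c.sum_sigma_eq_sum (fun _ => (1 : ℕ))

lemma partSize_add_length_le (m : Fin c.length) : c.partSize m + c.length ≤ n + 1 := by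
  have hsum : ∑ i, c.partSize i = ∑ i, (c.partSize i - 1) + c.length :=
    calc ∑ i, c.partSize i = ∑ i, ((c.partSize i - 1) + 1) :=
          sum_congr rfl fun i _ => (Nat.sub_add_cancel (c.partSize_pos i)).symm
      _ = _ := by simp [sum_add_distrib]
  have hm : c.partSize m - 1 ≤ ∑ i, (c.partSize i - 1) :=
    single_le_sum (f := fun i => c.partSize i - 1) (fun _ _ => Nat.zero_le _) (mem_univ m)
  have := c.partSize_pos m
  have := c.sum_partSize
  omega

end OrderedFinpartition

noncomputable def finpartitionBell {R : Type*} [CommSemiring R] (n k : ℕ) (y : ℕ → R) : R :=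
  ∑ c : OrderedFinpartition n with c.length = k, ∏ m, y (c.partSize m)

lemma finpartitionBell_congr {R : Type*} [CommSemiring R] {n k : ℕ} {y z : ℕ → R}
    (h : ∀ i, 1 ≤ i → i + k ≤ n + 1 → y i = z i) :
    finpartitionBell n k y = finpartitionBell n k z :=
  sum_congr rfl fun c hc => prod_congr rfl fun m _ => h _ (c.partSize_pos m)
    ((mem_filter.1 hc).2 ▸ c.partSize_add_length_le m)

theorem iteratedDeriv_comp_eq_sum_finpartitionBell {𝕜 : Type*} [NontriviallyNormedField 𝕜]
    {f g : 𝕜 → 𝕜} {n : ℕ} {x : 𝕜} (hn : 1 ≤ n) (hf : ContDiffAt 𝕜 n f (g x))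
    (hg : ContDiffAt 𝕜 n g x) :
    iteratedDeriv n (f ∘ g) x = ∑ k ∈ Icc 1 n,
      iteratedDeriv k f (g x) * finpartitionBell n k (fun i => iteratedDeriv i g x) := by
  have hlength (c : OrderedFinpartition n) : c.length ∈ Icc 1 n :=
    mem_Icc.2 ⟨c.length_pos hn, c.length_le⟩
  rw [iteratedDeriv_comp_eq_sum_orderedFinpartition hf hg le_rfl,
    ← sum_fiberwise_of_maps_to (fun c _ => hlength c)]
  refine sum_congr rfl fun k _ => ?_
  rw [finpartitionBell, mul_sum]
  exact sum_congr rfl fun c hc => by rw [← (mem_filter.1 hc).2]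

lemma bellPoly_eq_coeff_pow (n k : ℕ) (y : ℕ → ℝ) :
    bellPoly n k y = n ! / k ! *
      ((∑ i : Fin (n - k + 1), C (y (i + 1) / (i + 1 : ℕ) !) * X ^ (i.1 + 1)) ^ k).coeff n := by
  rw [coeff_sum_C_mul_X_pow_pow, mul_sum, bellPoly]
  have hset : (Fintype.piFinset fun _ : Fin (n - k + 1) => range (n + 1)).filter
      (fun j => (∑ i, j i) = k ∧ (∑ i, (i.1 + 1) * j i) = n) =
      (piAntidiag univ k).filter (fun j => ∑ i, (i.1 + 1) * j i = n) := by
    ext j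
    simp only [mem_filter, Fintype.mem_piFinset, mem_range, mem_piAntidiag, mem_univ,
      implies_true, and_true]
    refine ⟨fun h => h.2, fun h => ⟨fun i => ?_, h⟩⟩
    have := single_le_sum (f := fun i : Fin (n - k + 1) => (i.1 + 1) * j i)
      (fun _ _ => Nat.zero_le _) (mem_univ i)
    nlinarith
  rw [hset]
  refine sum_congr rfl fun j hj => ?_
  have hmult := Nat.multinomial_spec univ j
  rw [(mem_piAntidiag.1 (mem_filter.1 hj).1).1] at hmult
  have hfac : (∏ i, ((j i) ! : ℝ)) ≠ 0 := prod_ne_zero_iff.2 fun i _ => by positivity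
  have hk : (k ! : ℝ) ≠ 0 := by positivity
  field_simp
  rw [← Nat.cast_prod, ← hmult]
  push_cast
  ring

lemma finpartitionBell_eq_bellPoly {n k : ℕ} (hk : 1 ≤ k) (hkn : k ≤ n) (y : ℕ → ℝ) :
    finpartitionBell n k y = bellPoly n k y := by
  set G : ℝ[X] := ∑ i : Fin (n - k + 1), C (y (i + 1) / (i + 1 : ℕ) !) * X ^ (i.1 + 1)
  set F : ℝ[X] := C (k ! : ℝ)⁻¹ * X ^ k
  have hG0 : G.eval 0 = 0 := by simp [G, eval_finsetSum]
  have hG (i : ℕ) (hi : 1 ≤ i) (hik : i + k ≤ n + 1) :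
      y i = iteratedDeriv i (fun t => G.eval t) 0 := by
    rw [iteratedDeriv_eval_zero, finsetSum_coeff,
      Fintype.sum_eq_single (⟨i - 1, by omega⟩ : Fin (n - k + 1)) fun m hm => ?_]
    · simp only [coeff_C_mul_X_pow, Nat.sub_add_cancel hi, if_true]
      field_simp
    · rw [coeff_C_mul_X_pow, if_neg]
      intro h
      exact hm (Fin.ext (by dsimp only; omega))
  have hF (m : ℕ) : iteratedDeriv m (fun t => F.eval t) 0 = if m = k then 1 else 0 := by
    rw [iteratedDeriv_eval_zero, coeff_C_mul_X_pow]
    split_ifs with h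
    · subst h; field_simp
    · rw [mul_zero]
  have hcomp := iteratedDeriv_comp_eq_sum_finpartitionBell (by omega : 1 ≤ n)
    ((F.contDiff_eval n).contDiffAt (x := G.eval 0)) ((G.contDiff_eval n).contDiffAt (x := 0))
  simp only [hG0, hF, ite_mul, one_mul, zero_mul, sum_ite_eq', mem_Icc, hk, hkn, and_self,
    if_true] at hcomp
  calc finpartitionBell n k y
      = finpartitionBell n k fun i => iteratedDeriv i (fun t => G.eval t) 0 :=
        finpartitionBell_congr hG
    _ = iteratedDeriv n (fun t => (F.comp G).eval t) 0 := by
        rw [← hcomp]; simp only [eval_comp]; rfl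
    _ = bellPoly n k y := by
        rw [iteratedDeriv_eval_zero, bellPoly_eq_coeff_pow, mul_comp, C_comp, X_pow_comp,
          coeff_C_mul]
        ring

theorem faa_di_bruno_univariate (n : ℕ) (hn : 1 ≤ n) (f g : ℝ → ℝ)
    (hf : ContDiff ℝ n f) (hg : ContDiff ℝ n g) (x : ℝ) :
    iteratedDeriv n (f ∘ g) x =
      ∑ k ∈ Finset.Icc 1 n,
        iteratedDeriv k f (g x) * bellPoly n k (fun i => iteratedDeriv i g x) := by
  rw [iteratedDeriv_comp_eq_sum_finpartitionBell hn hf.contDiffAt hg.contDiffAt]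
  refine sum_congr rfl fun k hk => ?_
  rw [finpartitionBell_eq_bellPoly (mem_Icc.1 hk).1 (mem_Icc.1 hk).2]
end

section
/- Let m ≥ 1, let A_i be a real r_i × c_i matrix for i = 1,…,m, and let σ be a permutation of {1,…,m}. Then, after the canonical identification of the product index sets, K^σ_{(r_1,…,r_m)} · (A_1 ⊗ A_2 ⊗ … ⊗ A_m) · K^{σ⁻¹}_{(c_{σ⁻¹(1)},…,c_{σ⁻¹(m)})} = A_{σ⁻¹(1)} ⊗ A_{σ⁻¹(2)} ⊗ … ⊗ A_{σ⁻¹(m)}. -/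
open Kronecker Matrix

noncomputable section

/-- Elementary matrix with a single `1` at position `(i, j)`. -/
def elemM {α β : Type*} [DecidableEq α] [DecidableEq β] (i : α) (j : β) :
    Matrix α β ℝ :=
  Matrix.of fun a b => if a = i ∧ b = j then 1 else 0

/-- The shuffle matrix `K^σ_ι = ∑_i E^{i_{σ⁻¹(1)}, i_1} ⊗ ⋯ ⊗ E^{i_{σ⁻¹(m)}, i_m}`,
with the `t`-th Kronecker factor of size `ι (σ⁻¹ t) × ι t`. -/
def shuffle {m : ℕ} (σ : Equiv.Perm (Fin m)) (ι : Fin m → Type*)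
    [∀ t, Fintype (ι t)] [∀ t, DecidableEq (ι t)] :
    Matrix (∀ t, ι (σ⁻¹ t)) (∀ t, ι t) ℝ :=
  ∑ i : ∀ t, ι t, Matrix.of fun a b => ∏ t, elemM (i (σ⁻¹ t)) (i t) (a t) (b t)

/-- Kronecker product of a finite family of matrices, rows and columns indexed
by tuples via the canonical identification of the iterated product index sets. -/
def kron' {m : ℕ} {ι κ : Fin m → Type*} (M : ∀ t, Matrix (ι t) (κ t) ℝ) :
    Matrix (∀ t, ι t) (∀ t, κ t) ℝ :=
  Matrix.of fun a b => ∏ t, M t (a t) (b t)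


/-! `K^σ` is the permutation matrix of the reindexing `(i_t)_t ↦ (i_{σ⁻¹ t})_t` of index tuples, so
multiplying by shuffle matrices on both sides only reindexes the rows and columns of
`A_1 ⊗ ⋯ ⊗ A_m`; on the entry `∏_t A_t (i_t, j_t)` this reindexing just permutes the factors. -/

open Equiv

lemma shuffle_apply {m : ℕ} (σ : Perm (Fin m)) (ι : Fin m → Type*)
    [∀ t, Fintype (ι t)] [∀ t, DecidableEq (ι t)] (a : ∀ t, ι (σ⁻¹ t)) (b : ∀ t, ι t) :
    shuffle σ ι a b = if ∀ t, a t = b (σ⁻¹ t) then 1 else 0 := by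
  simp only [shuffle, elemM, Matrix.sum_apply, Matrix.of_apply, Finset.prod_boole]
  rw [Finset.sum_eq_single b]
  · simp
  · intro i _ hib
    rw [if_neg]
    intro h
    exact hib (funext fun t => (h t (Finset.mem_univ t)).2.symm)
  · simp

lemma shuffle_eq_toMatrix {m : ℕ} (σ : Perm (Fin m)) (ι : Fin m → Type*)
    [∀ t, Fintype (ι t)] [∀ t, DecidableEq (ι t)] :
    shuffle σ ι = (piCongrLeft ι σ⁻¹).toPEquiv.toMatrix := by
  ext a b
  rw [shuffle_apply, PEquiv.toMatrix_apply]
  refine if_congr ?_ rfl rfl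
  rw [toPEquiv_apply, Option.mem_some_iff, ← eq_symm_apply, funext_iff]
  simp only [piCongrLeft_symm_apply]

lemma submatrix_kron'_piCongrLeft {m : ℕ} {ι κ : Fin m → Type*}
    (M : ∀ t, Matrix (ι t) (κ t) ℝ) (e : Perm (Fin m)) :
    (kron' M).submatrix (piCongrLeft ι e) (piCongrLeft κ e) = kron' fun t => M (e t) := by
  ext a b
  simp only [kron', Matrix.submatrix_apply, Matrix.of_apply]
  rw [← Equiv.prod_comp e]
  simp only [piCongrLeft_apply_apply]

lemma shuffle_inv_submatrix_finCast {m : ℕ} (c : Fin m → ℕ) (σ : Perm (Fin m)) :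
    (shuffle σ⁻¹ fun t => Fin (c (σ⁻¹ t))).submatrix
        (fun (b : ∀ t, Fin (c t)) t => Fin.cast (by simp) (b t)) id =
      (piCongrLeft (fun t => Fin (c t)) σ⁻¹).symm.toPEquiv.toMatrix := by
  ext b d
  rw [Matrix.submatrix_apply, shuffle_apply, PEquiv.toMatrix_apply]
  refine if_congr ?_ rfl rfl
  rw [toPEquiv_apply, Option.mem_some_iff, symm_apply_eq, funext_iff]
  refine forall_congr' fun t => ?_
  rw [piCongrLeft_apply_eq_cast, ← Fin.cast_eq_cast (by simp), Fin.ext_iff, Fin.ext_iff,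
    Fin.val_cast, Fin.val_cast]
  rfl

/-- Theorem 3.12 of d'Angeli–Donno: shuffling a Kronecker product of `m`
matrices by a permutation `σ`:
`K^σ_r (A_1 ⊗ ⋯ ⊗ A_m) K^{σ⁻¹}_{c_{σ⁻¹}} = A_{σ⁻¹(1)} ⊗ ⋯ ⊗ A_{σ⁻¹(m)}`. -/
theorem shuffle_kronecker {m : ℕ} (r c : Fin m → ℕ)
    (A : ∀ t : Fin m, Matrix (Fin (r t)) (Fin (c t)) ℝ) (σ : Equiv.Perm (Fin m)) :
    shuffle σ (fun t => Fin (r t)) * kron' A *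
        (shuffle σ⁻¹ fun t => Fin (c (σ⁻¹ t))).submatrix
          (fun (b : ∀ t, Fin (c t)) t => Fin.cast (by simp) (b t)) id =
      kron' fun t => A (σ⁻¹ t) := by
  rw [shuffle_eq_toMatrix, shuffle_inv_submatrix_finCast, PEquiv.toMatrix_toPEquiv_mul,
    PEquiv.mul_toMatrix_toPEquiv, symm_symm, Matrix.submatrix_submatrix]
  exact submatrix_kron'_piCongrLeft A σ⁻¹

end
end

section
/- Let g : ℝ^{n_x} → ℝ^{n_y} be infinitely differentiable, let n ≥ k ≥ 1, let j = (j_1,…,j_{n-k+1}) be nonnegative integers with j_1+…+j_{n-k+1} = k and j_1+2j_2+…+(n-k+1)j_{n-k+1} = n, and let x ∈ ℝ^{n_x}. Write the Bell base polynomial B̃^g_{n,k,j}(x) := g_x(x)^{⊗j_1} ⊗ g_{x^2}(x)^{⊗j_2} ⊗ … ⊗ g_{x^{n-k+1}}(x)^{⊗j_{n-k+1}} as a Kronecker product of k factors G_1 ⊗ … ⊗ G_k (where G_1,…,G_{j_1} = g_x, the next j_2 factors equal g_{x^2}, etc.), and for a permutation σ of {1,…,k} let B̃^{g,σ}_{n,k,j}(x)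 := G_{σ(1)} ⊗ … ⊗ G_{σ(k)}. Then for every row vector D ∈ ℝ^{1×n_y} and column vector X ∈ ℝ^{n_x×1}, D^{⊗k} · B̃^g_{n,k,j}(x) · X^{⊗n} = D^{⊗k} · B̃^{g,σ}_{n,k,j}(x) · X^{⊗n} (after canonical identification of the product index sets). -/
open Kronecker Matrix

noncomputable section

/-- `m`-fold Kronecker power of a matrix, with rows/columns indexed by tuples
(the canonical identification of the iterated product index sets). -/
def kronPow {α β : Type*} (A : Matrix α β ℝ) (m : ℕ) :
    Matrix (Fin m → α) (Fin m → β) ℝ :=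
  Matrix.of fun i j => ∏ t, A (i t) (j t)

/-- The `n_y × n_x^l` matrix of `l`-th order partial derivatives of
`g : ℝ^{n_x} → ℝ^{n_y}`: entry in row `i` and column `(j_1, …, j_l)` is
`∂^l g_i / ∂x_{j_1} ⋯ ∂x_{j_l}`. -/
def gDeriv {nx ny : ℕ} (g : (Fin nx → ℝ) → Fin ny → ℝ) (l : ℕ) (x : Fin nx → ℝ) :
    Matrix (Fin ny) (Fin l → Fin nx) ℝ :=
  Matrix.of fun i c => iteratedFDeriv ℝ l (fun y => g y i) x fun u => Pi.single (c u) 1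

/-- Canonical position of the pair (block `t`, offset `s`) in the concatenation
of blocks of lengths `l 0, l 1, …`. -/
def finSigma {k : ℕ} (l : Fin k → ℕ) (t : Fin k) (s : Fin (l t)) : Fin (∑ t', l t') :=
  ⟨∑ t' ∈ Finset.univ.filter (fun t' => t' < t), l t' + s.1, by
    have hs := s.2
    have h2 : ∑ t' ∈ insert t (Finset.univ.filter (fun t' => t' < t)), l t' ≤ ∑ t', l t' :=
      Finset.sum_le_sum_of_subset (Finset.subset_univ _)
    rw [Finset.sum_insert (by simp)] at h2
    omega⟩

/-- The partial Bell base polynomial written as a Kronecker product of `k`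
factors `G_t = g_{x^{l t}}`, where `l : Fin k → ℕ` lists the orders of the
factors; rows and columns are indexed by tuples via the canonical
identification of the Kronecker index sets. -/
def bellBase {nx ny : ℕ} (g : (Fin nx → ℝ) → Fin ny → ℝ) (x : Fin nx → ℝ)
    {k : ℕ} (l : Fin k → ℕ) :
    Matrix (Fin k → Fin ny) (Fin (∑ t, l t) → Fin nx) ℝ :=
  Matrix.of fun r c => ∏ t, gDeriv g (l t) x (r t) fun s => c (finSigma l t s)

lemma offset_mono {k : ℕ} (l : Fin k → ℕ) {a b : Fin k} (h : a < b) :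
    (∑ t' ∈ Finset.univ.filter (fun t' => t' < a), l t') + l a
      ≤ ∑ t' ∈ Finset.univ.filter (fun t' => t' < b), l t' := by
  have hsub : insert a (Finset.univ.filter (fun t' => t' < a))
      ⊆ Finset.univ.filter (fun t' => t' < b) := by
    intro u hu
    simp only [Finset.mem_insert, Finset.mem_filter, Finset.mem_univ, true_and] at hu ⊢
    rcases hu with rfl | hu
    · exact h
    · exact hu.trans h
  calc (∑ t' ∈ Finset.univ.filter (fun t' => t' < a), l t') + l a
      = ∑ t' ∈ insert a (Finset.univ.filter (fun t' => t' < a)), l t' := by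
        rw [Finset.sum_insert (by simp), add_comm]
    _ ≤ _ := Finset.sum_le_sum_of_subset hsub

def finSigmaEquiv {k : ℕ} (l : Fin k → ℕ) : (Σ t, Fin (l t)) ≃ Fin (∑ t, l t) :=
  Equiv.ofBijective (fun p => finSigma l p.1 p.2) <| by
    rw [Fintype.bijective_iff_injective_and_card]
    refine ⟨?_, by simp⟩
    rintro ⟨t, s⟩ ⟨t', s'⟩ h
    have hv : (finSigma l t s).1 = (finSigma l t' s').1 := congrArg Fin.val h
    simp only [finSigma] at hv
    rcases lt_trichotomy t t' with hlt | rfl | hlt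
    · have := offset_mono l hlt
      have hs := s.2
      omega
    · have : s = s' := Fin.ext (by omega)
      rw [this]
    · have := offset_mono l hlt
      have hs := s'.2
      omega


/-- Order invariance of partial Bell base polynomials: sandwiched between
`D^{⊗k}` and `X^{⊗n}`, the base polynomial
`B̃^g_{n,k,j} = g_x^{⊗j_1} ⊗ g_{x²}^{⊗j_2} ⊗ ⋯ = G_1 ⊗ ⋯ ⊗ G_k`
(with monotone order list `l` having multiplicities `j`) equals any of its
shuffles `B̃^{g,σ}_{n,k,j} = G_{σ(1)} ⊗ ⋯ ⊗ G_{σ(k)}`. -/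
theorem bellBase_order_invariance {nx ny : ℕ} (n k : ℕ) (hk : 1 ≤ k) (hkn : k ≤ n)
    (g : (Fin nx → ℝ) → Fin ny → ℝ) (hg : ContDiff ℝ (⊤ : ℕ∞) g)
    (j : ℕ → ℕ)
    (hj1 : ∑ i ∈ Finset.Icc 1 (n - k + 1), j i = k)
    (hj2 : ∑ i ∈ Finset.Icc 1 (n - k + 1), i * j i = n)
    (hj0 : ∀ i, i ∉ Finset.Icc 1 (n - k + 1) → j i = 0)
    (l : Fin k → ℕ) (hmono : Monotone l)
    (hlj : ∀ i, (Finset.univ.filter fun t => l t = i).card = j i)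
    (hsum : ∑ t, l t = n)
    (x : Fin nx → ℝ) (σ : Equiv.Perm (Fin k))
    (D : Matrix (Fin 1) (Fin ny) ℝ) (X : Matrix (Fin nx) (Fin 1) ℝ) :
    kronPow D k *
        (bellBase g x l).submatrix id (fun (c : Fin n → Fin nx) v => c (Fin.cast hsum v)) *
        kronPow X n =
      kronPow D k *
          (bellBase g x fun t => l (σ t)).submatrix id
            (fun (c : Fin n → Fin nx) v =>
              c (Fin.cast ((Fintype.sum_equiv σ (fun t => l (σ t)) l fun _ => rfl).trans hsum) v)) *
          kronPow X n := by
  set hsum' : ∑ t, l (σ t) = n :=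
    (Fintype.sum_equiv σ (fun t => l (σ t)) l fun _ => rfl).trans hsum with hhs
  set π : Fin n ≃ Fin n :=
    (finCongr hsum').symm.trans
      (((finSigmaEquiv (fun t => l (σ t))).symm.trans
        ((Equiv.sigmaCongrLeft (β := fun t => Fin (l t)) σ).trans (finSigmaEquiv l))).trans
        (finCongr hsum)) with hπ
  have hπkey : ∀ (t : Fin k) (s : Fin (l (σ t))),
      π (Fin.cast hsum' (finSigma (fun t => l (σ t)) t s)) = Fin.cast hsum (finSigma l (σ t) s) := by
    intro t s
    have h1 : (finCongr hsum').symm (Fin.cast hsum' (finSigma (fun t => l (σ t)) t s))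
        = finSigma (fun t => l (σ t)) t s := by
      ext; simp
    have h2 : (finSigmaEquiv (fun t => l (σ t))).symm (finSigma (fun t => l (σ t)) t s)
        = ⟨t, s⟩ :=
      (finSigmaEquiv (fun t => l (σ t))).symm_apply_apply ⟨t, s⟩
    simp only [hπ, Equiv.trans_apply, h1, h2]
    rfl
  ext i jj
  simp only [Matrix.mul_apply, Finset.sum_mul]
  refine Fintype.sum_equiv (Equiv.arrowCongr π.symm (Equiv.refl (Fin nx))) _ _ ?_
  intro c
  refine Fintype.sum_equiv (Equiv.arrowCongr σ.symm (Equiv.refl (Fin ny))) _ _ ?_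
  intro r
  have hD : (kronPow D k i r : ℝ)
      = kronPow D k i ((Equiv.arrowCongr σ.symm (Equiv.refl (Fin ny))) r) := by
    simp only [kronPow, Matrix.of_apply, Equiv.arrowCongr_apply, Function.comp_apply,
      Equiv.symm_symm, Equiv.refl_apply]
    rw [← Equiv.prod_comp σ (fun t => D (i t) (r t))]
    exact Finset.prod_congr rfl fun t _ =>
      congrArg (fun a => D a (r (σ t))) (Subsingleton.elim _ _)
  have hX : (kronPow X n c jj : ℝ)
      = kronPow X n ((Equiv.arrowCongr π.symm (Equiv.refl (Fin nx))) c) jj := by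
    simp only [kronPow, Matrix.of_apply, Equiv.arrowCongr_apply, Function.comp_apply,
      Equiv.symm_symm, Equiv.refl_apply]
    rw [← Equiv.prod_comp π (fun v => X (c v) (jj v))]
    exact Finset.prod_congr rfl fun v _ =>
      congrArg (X (c (π v))) (Subsingleton.elim _ _)
  have hB : (bellBase g x l).submatrix id
        (fun (c : Fin n → Fin nx) v => c (Fin.cast hsum v)) r c
      = (bellBase g x fun t => l (σ t)).submatrix id
          (fun (c : Fin n → Fin nx) v => c (Fin.cast hsum' v))
          ((Equiv.arrowCongr σ.symm (Equiv.refl (Fin ny))) r)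
          ((Equiv.arrowCongr π.symm (Equiv.refl (Fin nx))) c) := by
    simp only [bellBase, Matrix.submatrix_apply, Matrix.of_apply, id_eq,
      Equiv.arrowCongr_apply, Function.comp_apply, Equiv.symm_symm, Equiv.refl_apply]
    rw [← Equiv.prod_comp σ
      (fun t => gDeriv g (l t) x (r t) fun s => c (Fin.cast hsum (finSigma l t s)))]
    exact Finset.prod_congr rfl fun t _ =>
      congrArg (gDeriv g (l (σ t)) x (r (σ t)))
        (funext fun s => (congrArg c (hπkey t s)).symm)
  rw [hD, hX, hB]

end
end

section
/- (Kronecker product rule for matrix derivatives.) Let F : ℝ^{n_x} → M_{s×t}(ℝ) and H : ℝ^{n_x} → M_{p×q}(ℝ) be differentiable at x ∈ ℝ^{n_x}. Then ∂(F ⊗ H)/∂x'(x) = F(x) ⊗ (∂H/∂x')(x) + ( (∂F/∂x')(x) ⊗ H(x) ) · ( I_t ⊗ K_{n_x,q} ), after canonical identification of the product index sets, where I_t is the t × t identity matrix. -/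
/-! Entrywise, `∂(F ⊗ H)/∂x'` is the product rule for `F_{ij} H_{kl}`. Its second term,
`∂F_{ij}/∂x_m · H_{kl}`, is an entry of `(∂F/∂x') ⊗ H` sitting in column `((j, m), l)`
instead of `((j, l), m)`; right multiplication by the permutation matrix `I_t ⊗ K_{n_x,q}`
is exactly this reordering of columns. -/

open Kronecker Matrix

noncomputable section

/-- The derivative matrix `∂F/∂x'` of a matrix-valued map: entry in row `i`
and column `(j, k)` is `∂F_{ij}/∂x_k`. -/
def matDeriv {nx : ℕ} {α β : Type*} (F : (Fin nx → ℝ) → Matrix α β ℝ) (x : Fin nx → ℝ) :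
    Matrix α (β × Fin nx) ℝ :=
  Matrix.of fun i jk => fderiv ℝ (fun y => F y i jk.1) x (Pi.single jk.2 1)

/-- The commutation matrix `K_{α,β} = ∑_{i,j} E^{i,j} ⊗ E^{j,i}`, characterized
by `K_{α,β} (x ⊗ y) = y ⊗ x`. -/
def commM (α β : Type*) [Fintype α] [Fintype β] [DecidableEq α] [DecidableEq β] :
    Matrix (α × β) (β × α) ℝ :=
  ∑ i : α, ∑ j : β, elemM i j ⊗ₖ elemM j i

lemma commM_apply {α β : Type*} [Fintype α] [Fintype β] [DecidableEq α] [DecidableEq β]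
    (a : α) (b : β) (c : β) (d : α) :
    commM α β (a, b) (c, d) = if a = d ∧ b = c then 1 else 0 := by
  simp [commM, elemM, Matrix.sum_apply, ite_and, @eq_comm _ c]

lemma mul_one_kronecker_commM_submatrix {m τ α β : Type*} [Fintype τ] [Fintype α] [Fintype β]
    [DecidableEq τ] [DecidableEq α] [DecidableEq β] (A : Matrix m ((τ × α) × β) ℝ) :
    A * ((1 : Matrix τ τ ℝ) ⊗ₖ commM α β).submatrix
        (fun r : (τ × α) × β => (r.1.1, (r.1.2, r.2)))
        (fun c : (τ × β) × α => (c.1.1, (c.1.2, c.2))) =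
      A.submatrix id (fun c : (τ × β) × α => ((c.1.1, c.2), c.1.2)) := by
  ext i ⟨⟨j, l⟩, k⟩
  simp [mul_apply, Fintype.sum_prod_type, commM_apply, one_apply, ite_and]

theorem matDeriv_kronecker_eq {nx : ℕ} {α β γ δ : Type*}
    {F : (Fin nx → ℝ) → Matrix α β ℝ} {H : (Fin nx → ℝ) → Matrix γ δ ℝ} {x : Fin nx → ℝ}
    (hF : ∀ i j, DifferentiableAt ℝ (fun y => F y i j) x)
    (hH : ∀ i j, DifferentiableAt ℝ (fun y => H y i j) x) :
    matDeriv (fun y => F y ⊗ₖ H y) x =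
      (F x ⊗ₖ matDeriv H x).submatrix id
          (fun c : (β × δ) × Fin nx => (c.1.1, (c.1.2, c.2))) +
        (matDeriv F x ⊗ₖ H x).submatrix id
          (fun c : (β × δ) × Fin nx => ((c.1.1, c.2), c.1.2)) := by
  ext ⟨i, k⟩ ⟨⟨j, l⟩, m⟩
  simp only [matDeriv, Matrix.add_apply, submatrix_apply, kroneckerMap_apply, of_apply, id_eq]
  rw [fderiv_fun_mul (hF i j) (hH k l)]
  simp [mul_comm]

/-- Kronecker product rule for matrix derivatives:
`∂(F ⊗ H)/∂x' = F ⊗ (∂H/∂x') + ((∂F/∂x') ⊗ H)(I_t ⊗ K_{n_x,q})`,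
after the canonical identification of the product index sets. -/
theorem matDeriv_kronecker {nx s t p q : ℕ}
    (F : (Fin nx → ℝ) → Matrix (Fin s) (Fin t) ℝ)
    (H : (Fin nx → ℝ) → Matrix (Fin p) (Fin q) ℝ)
    (x : Fin nx → ℝ)
    (hF : ∀ i j, DifferentiableAt ℝ (fun y => F y i j) x)
    (hH : ∀ i j, DifferentiableAt ℝ (fun y => H y i j) x) :
    matDeriv (fun y => F y ⊗ₖ H y) x =
      (F x ⊗ₖ matDeriv H x).submatrix id
          (fun c : (Fin t × Fin q) × Fin nx => (c.1.1, (c.1.2, c.2))) +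
        (matDeriv F x ⊗ₖ H x) *
          ((1 : Matrix (Fin t) (Fin t) ℝ) ⊗ₖ commM (Fin nx) (Fin q)).submatrix
            (fun r : (Fin t × Fin nx) × Fin q => (r.1.1, (r.1.2, r.2)))
            (fun c : (Fin t × Fin q) × Fin nx => (c.1.1, (c.1.2, c.2))) := by
  rw [matDeriv_kronecker_eq hF hH, mul_one_kronecker_commM_submatrix]

end
end

section
/- Let a, b ∈ ℝ and n ∈ ℕ. Then the n-th derivative at s = 0 of the function s ↦ exp(a·s + (1/2)·b·s²) equals Σ_{j=0}^{⌊n/2⌋} n! / ((n-2j)! · j! · 2^j) · a^{n-2j} · b^j. (This is the contraction with t^{⊗n} of the paper's formula for the n-th order moments of a multivariate normal distribution with mean μ and covariance Σ, where a = t'μ and b = t'Σt.) -/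
/-!
Since `F(s) = exp (a s + b s² / 2)` satisfies `F' = (a + b s) F`, Leibniz's rule gives the
three-term recursion `F⁽ⁿ⁺²⁾(0) = a F⁽ⁿ⁺¹⁾(0) + (n + 1) b F⁽ⁿ⁾(0)` with `F(0) = 1`, `F'(0) = a`.
The coefficient `n! / ((n - 2j)! j! 2^j) = C(n, 2j) (2j - 1)‼` counts the matchings with `j` edges
on `n` points; deciding whether the last point is matched gives
`c(n + 2, j + 1) = c(n + 1, j + 1) + (n + 1) c(n, j)`, so the sum obeys the same recursion.
-/

open Finset Nat

def matchingCount (n j : ℕ) : ℕ := n.choose (2 * j) * (2 * j - 1)‼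

lemma matchingCount_zero_right (n : ℕ) : matchingCount n 0 = 1 := by
  simp [matchingCount]

lemma matchingCount_eq_zero_of_lt {n j : ℕ} (h : n < 2 * j) : matchingCount n j = 0 := by
  simp [matchingCount, Nat.choose_eq_zero_of_lt h]

lemma matchingCount_add_two_add_one (n j : ℕ) :
    matchingCount (n + 2) (j + 1) =
      matchingCount (n + 1) (j + 1) + (n + 1) * matchingCount n j := by
  have hpair : (n + 1).choose (2 * j + 1) * (2 * j + 1) = (n + 1) * n.choose (2 * j) :=
    (Nat.add_one_mul_choose_eq n (2 * j)).symm
  rw [matchingCount, matchingCount, matchingCount, show 2 * (j + 1) = 2 * j + 1 + 1 by ring,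
    Nat.choose_succ_succ' (n + 1) (2 * j + 1), add_tsub_cancel_right, doubleFactorial_add_one,
    ← mul_assoc (n + 1), ← hpair]
  ring

lemma factorial_two_mul_eq_doubleFactorial_mul (j : ℕ) :
    (2 * j)! = (2 * j - 1)‼ * 2 ^ j * j ! := by
  cases j with
  | zero => rfl
  | succ k =>
    rw [show 2 * (k + 1) = 2 * k + 1 + 1 by ring, factorial_eq_mul_doubleFactorial,
      show 2 * k + 1 + 1 = 2 * (k + 1) by ring, doubleFactorial_two_mul]
    simp only [show 2 * (k + 1) - 1 = 2 * k + 1 by omega]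
    ring

lemma matchingCount_mul_factorial {n j : ℕ} (h : 2 * j ≤ n) :
    matchingCount n j * ((n - 2 * j)! * j ! * 2 ^ j) = n ! := by
  rw [← Nat.choose_mul_factorial_mul_factorial h, factorial_two_mul_eq_doubleFactorial_mul,
    matchingCount]
  ring

lemma matchingCount_eq_div {n j : ℕ} (h : 2 * j ≤ n) :
    (matchingCount n j : ℝ) = n ! / ((n - 2 * j)! * j ! * 2 ^ j) := by
  rw [eq_div_iff (by positivity)]
  exact_mod_cast matchingCount_mul_factorial h

lemma matchingCount_mul_pow_mul_self {R : Type*} [CommSemiring R] (n j : ℕ) (a : R) :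
    (matchingCount n j : R) * a ^ (n - 2 * j) * a = matchingCount n j * a ^ (n + 1 - 2 * j) := by
  rcases le_or_gt (2 * j) n with h | h
  · rw [show n + 1 - 2 * j = n - 2 * j + 1 by omega, pow_succ, mul_assoc]
  · simp [matchingCount_eq_zero_of_lt h]

section Moments

variable (a b : ℝ)

noncomputable def momentTerm (n j : ℕ) : ℝ := matchingCount n j * a ^ (n - 2 * j) * b ^ j

noncomputable def gaussianMoment (n : ℕ) : ℝ := ∑ j ∈ range (n / 2 + 1), momentTerm a b n j

lemma momentTerm_add_two_add_one (n j : ℕ) :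
    momentTerm a b (n + 2) (j + 1) =
      a * momentTerm a b (n + 1) (j + 1) + (n + 1) * b * momentTerm a b n j := by
  have hpow := matchingCount_mul_pow_mul_self (n + 1) (j + 1) a
  simp only [momentTerm, matchingCount_add_two_add_one, Nat.cast_add, Nat.cast_mul] at hpow ⊢
  rw [show n + 2 - 2 * (j + 1) = n - 2 * j by omega] at hpow ⊢
  linear_combination -b ^ (j + 1) * hpow

lemma gaussianMoment_eq_sum_range {n N : ℕ} (hN : n / 2 < N) :
    gaussianMoment a b n = ∑ j ∈ range N, momentTerm a b n j := by
  refine sum_subset (fun j hj => ?_) (fun j _ hj => ?_)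
  · simp only [mem_range] at hj ⊢
    omega
  · simp only [mem_range] at hj
    simp [momentTerm, matchingCount_eq_zero_of_lt (show n < 2 * j by omega)]

lemma gaussianMoment_zero : gaussianMoment a b 0 = 1 := by
  simp [gaussianMoment, momentTerm, matchingCount_zero_right]

lemma gaussianMoment_one : gaussianMoment a b 1 = a := by
  simp [gaussianMoment, momentTerm, matchingCount_zero_right]

lemma gaussianMoment_add_two (n : ℕ) :
    gaussianMoment a b (n + 2) =
      a * gaussianMoment a b (n + 1) + (n + 1) * b * gaussianMoment a b n := by
  have hzero : momentTerm a b (n + 2) 0 = a * momentTerm a b (n + 1) 0 := by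
    simp only [momentTerm, matchingCount_zero_right, mul_zero, Nat.sub_zero]
    ring
  rw [gaussianMoment_eq_sum_range a b (N := n + 3) (by omega),
    gaussianMoment_eq_sum_range a b (N := n + 3) (by omega),
    gaussianMoment_eq_sum_range a b (N := n + 2) (by omega),
    sum_range_succ' (momentTerm a b (n + 2)), sum_range_succ' (momentTerm a b (n + 1)), hzero]
  simp only [momentTerm_add_two_add_one, sum_add_distrib, mul_add, mul_sum]
  ring

end Moments

lemma iteratedDeriv_affine_mul {𝕜 : Type*} [NontriviallyNormedField 𝕜] {f : 𝕜 → 𝕜} {x : 𝕜}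
    {n : ℕ} (hf : ContDiffAt 𝕜 (n + 1) f x) (a b : 𝕜) :
    iteratedDeriv (n + 1) (fun y => (a + b * y) * f y) x =
      (a + b * x) * iteratedDeriv (n + 1) f x + (n + 1) * b * iteratedDeriv n f x := by
  have hderiv : deriv (fun y => a + b * y) = fun _ => b := by
    ext y; simp
  have hvanish : ∀ i, iteratedDeriv (i + 2) (fun y => a + b * y) x = 0 := by
    intro i
    rw [iteratedDeriv_succ', iteratedDeriv_succ', hderiv]
    simp
  rw [iteratedDeriv_fun_mul (by fun_prop) hf, sum_range_succ', sum_range_succ']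
  simp only [hvanish, mul_zero, Nat.reduceSubDiff, zero_mul, sum_const_zero, zero_add,
    Nat.choose_one_right, Nat.cast_add, Nat.cast_one, iteratedDeriv_succ', hderiv,
    iteratedDeriv_zero, add_tsub_cancel_right, Nat.choose_zero_right, one_mul, tsub_zero]
  ring

noncomputable def expQuadratic (a b s : ℝ) : ℝ := Real.exp (a * s + 1 / 2 * b * s ^ 2)

lemma contDiff_expQuadratic (a b : ℝ) : ContDiff ℝ ⊤ (expQuadratic a b) := by
  unfold expQuadratic
  fun_prop

lemma deriv_expQuadratic (a b : ℝ) :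
    deriv (expQuadratic a b) = fun s => (a + b * s) * expQuadratic a b s := by
  ext s
  have hpoly : HasDerivAt (fun s : ℝ => a * s + 1 / 2 * b * s ^ 2) (a + b * s) s :=
    (((hasDerivAt_id s).const_mul a).fun_add
      ((hasDerivAt_pow 2 s).const_mul (1 / 2 * b))).congr_deriv (by
        simp only [mul_one, one_div, Nat.add_one_sub_one, pow_one, add_right_inj]
        ring)
  exact hpoly.exp.deriv.trans (mul_comm _ _)

lemma iteratedDeriv_expQuadratic_add_two (a b : ℝ) (n : ℕ) :
    iteratedDeriv (n + 2) (expQuadratic a b) 0 =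
      a * iteratedDeriv (n + 1) (expQuadratic a b) 0 +
        (n + 1) * b * iteratedDeriv n (expQuadratic a b) 0 := by
  rw [iteratedDeriv_succ', deriv_expQuadratic,
    iteratedDeriv_affine_mul ((contDiff_expQuadratic a b).contDiffAt.of_le le_top)]
  simp

lemma iteratedDeriv_expQuadratic_zero (a b : ℝ) (n : ℕ) :
    iteratedDeriv n (expQuadratic a b) 0 = gaussianMoment a b n := by
  induction n using Nat.twoStepInduction with
  | zero => simp [expQuadratic, gaussianMoment_zero]
  | one => simp [deriv_expQuadratic, expQuadratic, gaussianMoment_one]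
  | more n ih₀ ih₁ =>
    rw [iteratedDeriv_expQuadratic_add_two, gaussianMoment_add_two, ih₀, ih₁]

/-- The `n`-th derivative at `s = 0` of `s ↦ exp(a s + b s²/2)` equals
`∑_{j=0}^{⌊n/2⌋} n!/((n-2j)! j! 2^j) a^{n-2j} b^j`.  (This is the contraction
with `t^{⊗n}` of the formula for the `n`-th moments of a multivariate normal
distribution with mean `μ` and covariance `Σ`, where `a = t'μ`, `b = t'Σt`.) -/
theorem normal_moment_scalar (a b : ℝ) (n : ℕ) :
    iteratedDeriv n (fun s : ℝ => Real.exp (a * s + 1 / 2 * b * s ^ 2)) 0 =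
      ∑ j ∈ Finset.range (n / 2 + 1),
        (n.factorial : ℝ) /
            (((n - 2 * j).factorial : ℝ) * (j.factorial : ℝ) * 2 ^ j) *
          a ^ (n - 2 * j) * b ^ j := by
  refine (iteratedDeriv_expQuadratic_zero a b n).trans (sum_congr rfl fun j hj => ?_)
  rw [momentTerm, matchingCount_eq_div (by simp only [mem_range] at hj; omega)]
end

section
/- Let b ∈ ℝ and m ∈ ℕ. Then the (2m)-th derivative at s = 0 of the function s ↦ exp((1/2)·b·s²) equals (2m)! / (m! · 2^m) · b^m, and the (2m+1)-th derivative at s = 0 of this function equals 0. (This is the contraction with t^{⊗n} of the paper's formula for the n-th order central moments of a multivariate normal distribution with covariance Σ, where b = t'Σt.) -/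
/-!
Substituting `c s²` into the exponential series gives the everywhere convergent power series
`exp (c s²) = ∑ₖ cᵏ / k! · s²ᵏ`, which has only even powers. The `n`-th derivative at `0` of a
function given by an everywhere convergent power series is `n!` times its `n`-th coefficient, so
the odd derivatives vanish and the `(2m)`-th one is `(2m)! · (b / 2)ᵐ / m!` for `c = b / 2`.
-/

open FormalMultilinearSeries Nat

theorem HasSum.extend_two_mul {R : Type*} [CommSemiring R] [TopologicalSpace R] {a : ℕ → R}
    {x s : R} (h : HasSum (fun k => a k * (x ^ 2) ^ k) s) :
    HasSum (fun n => Function.extend (2 * ·) a 0 n * x ^ n) s := by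
  have hinj : Function.Injective (2 * · : ℕ → ℕ) := mul_right_injective₀ two_ne_zero
  refine (hinj.hasSum_iff fun n hn => ?_).mp ?_
  · rw [Function.extend_apply' _ _ _ hn, Pi.zero_apply, zero_mul]
  · simpa only [Function.comp_def, hinj.extend_apply, pow_mul] using h

section

variable {𝕜 : Type*} [NontriviallyNormedField 𝕜]

theorem FormalMultilinearSeries.ofScalars_radius_eq_top_of_summable {c : ℕ → 𝕜}
    (hc : ∀ x : 𝕜, Summable fun n => c n * x ^ n) : (ofScalars 𝕜 c).radius = ⊤ := by
  refine ENNReal.eq_top_of_forall_nnreal_le fun r => (ofScalars 𝕜 c).le_radius_of_isBigO ?_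
  obtain ⟨x, hx⟩ := NormedField.exists_lt_norm 𝕜 r
  refine (Asymptotics.isBigO_of_le _ fun n => ?_).trans
    ((hc x).tendsto_atTop_zero.norm.isBigO_one ℝ)
  rw [norm_norm, Real.norm_of_nonneg (by positivity), ofScalars_norm, norm_mul, norm_pow]
  exact mul_le_mul_of_nonneg_left (pow_le_pow_left₀ r.2 hx.le n) (norm_nonneg (c n))

theorem iteratedDeriv_zero_eq_factorial_mul_of_hasSum [CompleteSpace 𝕜] {f : 𝕜 → 𝕜}
    {c : ℕ → 𝕜} (hf : ∀ x, HasSum (fun n => c n * x ^ n) (f x)) (n : ℕ) :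
    iteratedDeriv n f 0 = n ! * c n := by
  have hp : HasFPowerSeriesOnBall f (ofScalars 𝕜 c) 0 ⊤ :=
    { r_le := (ofScalars_radius_eq_top_of_summable fun x => (hf x).summable).ge
      r_pos := ENNReal.zero_lt_top
      hasSum := fun {y} _ => by simpa [ofScalars_apply_eq, mul_comm] using hf y }
  rw [iteratedDeriv_eq_iteratedFDeriv, ← hp.factorial_smul 1 n]
  simp

end

theorem Real.hasSum_exp_mul_sq (c x : ℝ) :
    HasSum (fun n => Function.extend (2 * ·) (fun k => c ^ k / k !) 0 n * x ^ n)
      (exp (c * x ^ 2)) := by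
  refine HasSum.extend_two_mul ?_
  convert NormedSpace.expSeries_div_hasSum_exp (c * x ^ 2) using 1
  · ext k
    ring
  · rw [exp_eq_exp_ℝ]

/-- The `(2m)`-th derivative at `s = 0` of `s ↦ exp(b s²/2)` equals
`(2m)!/(m! 2^m) b^m`, and the `(2m+1)`-th derivative at `s = 0` equals `0`.
(This is the contraction with `t^{⊗n}` of the formula for the `n`-th central
moments of a multivariate normal distribution with covariance `Σ`, `b = t'Σt`.) -/
theorem normal_central_moment_scalar (b : ℝ) (m : ℕ) :
    iteratedDeriv (2 * m) (fun s : ℝ => Real.exp (1 / 2 * b * s ^ 2)) 0 =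
        ((2 * m).factorial : ℝ) / ((m.factorial : ℝ) * 2 ^ m) * b ^ m ∧
      iteratedDeriv (2 * m + 1) (fun s : ℝ => Real.exp (1 / 2 * b * s ^ 2)) 0 = 0 := by
  simp only [iteratedDeriv_zero_eq_factorial_mul_of_hasSum (Real.hasSum_exp_mul_sq _)]
  constructor
  · rw [(mul_right_injective₀ two_ne_zero).extend_apply]
    field_simp
    rw [div_pow, div_mul_cancel₀ _ (pow_ne_zero _ two_ne_zero)]
  · rw [Function.extend_apply' _ _ _ fun ⟨k, hk⟩ => by omega, Pi.zero_apply, mul_zero]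
end
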